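/- Let n ≥ 1 and z : Fin n → ℝ, and define H : ℝ → ℝ by H(β) = −∑_i softmax(β·z)_i · log softmax(β·z)_i. Then for every β ∈ ℝ, H has derivative at β equal to −β · V(β), where V(β) = ∑_i softmax(β·z)_i · (z_i)² − (∑_i softmax(β·z)_i · z_i)² is the variance of the logits under the distribution softmax(β·z) (a HasDerivAt statement). -/

import Mathlib

open Real Set

/-- Softmax of a logit vector `w`. -/
noncomputable def softmax {n : ℕ} (w : Fin n → ℝ) (i : Fin n) : ℝ :=
  Real.exp (w i) / ∑ j, Real.exp (w j)

/-! Since `log softmax(β z)_i = β z_i - log Z(β)` with `Z(β) = ∑ j, exp (β z_j)`, the entropy is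
`log Z(β) - β E_β[z]`. The log-partition function has derivative `E_β[z]` and `E_β[z]` has
derivative `Var_β(z)`, so the two mean terms cancel and `-β Var_β(z)` remains. -/

theorem hasDerivAt_sum_exp_mul_mul {ι : Type*} [Fintype ι] (z f : ι → ℝ) (β : ℝ) :
    HasDerivAt (fun b => ∑ j, exp (b * z j) * f j) (∑ j, exp (β * z j) * (z j * f j)) β := by
  refine HasDerivAt.fun_sum fun j _ => ?_
  simpa only [mul_assoc] using ((hasDerivAt_mul_const (z j)).exp).mul_const (f j)

theorem hasDerivAt_sum_exp_mul {ι : Type*} [Fintype ι] (z : ι → ℝ) (β : ℝ) :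
    HasDerivAt (fun b => ∑ j, exp (b * z j)) (∑ j, exp (β * z j) * z j) β := by
  simpa using hasDerivAt_sum_exp_mul_mul z 1 β

namespace softmax

variable {n : ℕ}

theorem sum_mul_eq_div (w f : Fin n → ℝ) :
    ∑ i, softmax w i * f i = (∑ i, exp (w i) * f i) / ∑ j, exp (w j) := by
  rw [Finset.sum_div]
  exact Finset.sum_congr rfl fun _ _ => div_mul_eq_mul_div _ _ _

variable [NeZero n]

theorem sum_exp_pos (w : Fin n → ℝ) : 0 < ∑ j, exp (w j) :=
  Finset.sum_pos (fun _ _ => exp_pos _) Finset.univ_nonempty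

theorem sum_eq_one (w : Fin n → ℝ) : ∑ i, softmax w i = 1 := by
  simp only [softmax, ← Finset.sum_div]
  exact div_self (sum_exp_pos w).ne'

theorem log_eq (w : Fin n → ℝ) (i : Fin n) :
    log (softmax w i) = w i - log (∑ j, exp (w j)) := by
  rw [softmax, log_div (exp_ne_zero _) (sum_exp_pos w).ne', log_exp]

theorem neg_sum_mul_log (w : Fin n → ℝ) :
    -∑ i, softmax w i * log (softmax w i) = log (∑ j, exp (w j)) - ∑ i, softmax w i * w i := by
  simp only [log_eq, mul_sub, Finset.sum_sub_distrib, ← Finset.sum_mul, sum_eq_one, one_mul]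
  ring

theorem hasDerivAt_log_sum_exp_mul (z : Fin n → ℝ) (β : ℝ) :
    HasDerivAt (fun b => log (∑ j, exp (b * z j))) (∑ i, softmax (fun k => β * z k) i * z i) β := by
  rw [sum_mul_eq_div]
  exact (hasDerivAt_sum_exp_mul z β).log (sum_exp_pos _).ne'

theorem hasDerivAt_sum_mul (z : Fin n → ℝ) (β : ℝ) :
    HasDerivAt (fun b => ∑ i, softmax (fun k => b * z k) i * z i)
      (∑ i, softmax (fun k => β * z k) i * z i ^ 2
        - (∑ i, softmax (fun k => β * z k) i * z i) ^ 2) β := by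
  simp only [sum_mul_eq_div]
  have hZ := (sum_exp_pos fun k => β * z k).ne'
  refine ((hasDerivAt_sum_exp_mul_mul z z β).div (hasDerivAt_sum_exp_mul z β) hZ).congr_deriv ?_
  field_simp

end softmax

theorem entropy_hasDerivAt_neg_beta_mul_variance
    (n : ℕ) (hn : 1 ≤ n) (z : Fin n → ℝ) (β : ℝ) :
    HasDerivAt
      (fun b : ℝ => -∑ i, softmax (fun k => b * z k) i * Real.log (softmax (fun k => b * z k) i))
      (-β * ((∑ i, softmax (fun k => β * z k) i * (z i) ^ 2)
        - (∑ i, softmax (fun k => β * z k) i * z i) ^ 2)) β := by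
  have : NeZero n := ⟨by omega⟩
  have entropy_eq : (fun b : ℝ => -∑ i, softmax (fun k => b * z k) i *
      Real.log (softmax (fun k => b * z k) i)) = fun b =>
        log (∑ j, exp (b * z j)) - b * ∑ i, softmax (fun k => b * z k) i * z i := by
    funext b
    rw [softmax.neg_sum_mul_log, Finset.mul_sum]
    simp only [mul_left_comm]
  rw [entropy_eq]
  refine ((softmax.hasDerivAt_log_sum_exp_mul z β).sub
    ((hasDerivAt_id β).mul (softmax.hasDerivAt_sum_mul z β))).congr_deriv ?_
  simp only [id, one_mul]
  ring
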